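/- arXiv:1807.04654 — 3 statements merged into one kernel-verified Lean document; each statement's English description precedes it below -/
import Mathlib

section
/- Let G be a countable group. Then there exist a countable free abelian group Γ (a subgroup of the direct sum ⊕_ℕ ℤ) and an aperiodic minimal Cantor system (X,S,Γ) such that G is isomorphic to a subgroup of Norm(S,Γ). -/
open TopologicalSpace

/-- The group of self-homeomorphisms of a space, with `(f * g) x = f (g x)`. -/
instance homeoGroup {X : Type*} [TopologicalSpace X] : Group (X ≃ₜ X) where
  mul f g := g.trans f
  one := Homeomorph.refl X
  inv := Homeomorph.symm
  mul_assoc _ _ _ := Homeomorph.ext fun _ => rfl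
  one_mul _ := Homeomorph.ext fun _ => rfl
  mul_one _ := Homeomorph.ext fun _ => rfl
  inv_mul_cancel f := Homeomorph.ext fun x => f.symm_apply_apply x

/-- A Cantor system: an action of the group `Γ` by homeomorphisms on a Cantor set, i.e. on a
nonempty compact metrizable totally disconnected perfect space. -/
structure CantorSys (Γ : Type) [Group Γ] where
  X : Type
  [topX : TopologicalSpace X]
  [compactX : CompactSpace X]
  [metrX : MetrizableSpace X]
  [tdX : TotallyDisconnectedSpace X]
  [perfX : PerfectSpace X]
  [neX : Nonempty X]
  act : Γ →* (X ≃ₜ X)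

attribute [instance] CantorSys.topX CantorSys.compactX CantorSys.metrX CantorSys.tdX
  CantorSys.perfX CantorSys.neX

namespace CGNaux

/-- The Cantor space underlying our system: a countable product of copies of `ℤ_[2]`. -/
abbrev Y : Type := ℕ → ℤ_[2]

/-- The embedding of `⊕_ℕ ℤ` into `∏_ℕ ℤ_[2]`. -/
noncomputable def embed : (ℕ →₀ ℤ) →+ Y where
  toFun γ := fun n => ((γ n : ℤ) : ℤ_[2])
  map_zero' := by funext n; simp
  map_add' a b := by funext n; simp

theorem embed_apply (γ : ℕ →₀ ℤ) (n : ℕ) : embed γ n = ((γ n : ℤ) : ℤ_[2]) := rfl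

theorem embed_injective : Function.Injective embed := by
  intro a b h
  ext n
  have := congrFun h n
  rw [embed_apply, embed_apply] at this
  exact_mod_cast this

/-- The product space is perfect. -/
instance instPerfY : PerfectSpace Y := by
  rw [perfectSpace_iff_forall_not_isolated]
  intro x
  rw [← Filter.forall_mem_nonempty_iff_neBot]
  intro s hs
  obtain ⟨U, hUo, hxU, hUs⟩ := mem_nhdsWithin.1 hs
  obtain ⟨I, u, hu, hpi⟩ := isOpen_pi_iff.1 hUo x hxU
  obtain ⟨n, hn⟩ := Infinite.exists_notMem_finset I
  refine ⟨Function.update x n (x n + 1), hUs ⟨hpi ?_, ?_⟩⟩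
  · intro i hi
    rw [Function.update_of_ne (by rintro rfl; exact hn hi)]
    exact (hu i hi).2
  · intro h
    have := congrFun h n
    rw [Function.update_self] at this
    exact one_ne_zero (add_eq_left.1 this)

/-- Density of the image of `⊕_ℕ ℤ` translated by any point. -/
theorem dense_orbit (x : Y) : Dense (Set.range fun γ : ℕ →₀ ℤ => embed γ + x) := by
  rw [dense_iff_inter_open]
  intro U hUo ⟨y, hy⟩
  obtain ⟨I, u, hu, hpi⟩ := isOpen_pi_iff.1 hUo y hy
  have key : ∀ i ∈ I, ∃ z : ℤ, ((z : ℤ_[2]) + x i) ∈ u i := by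
    intro i hi
    have hopen : IsOpen ((fun t : ℤ_[2] => t + x i) ⁻¹' u i) :=
      (hu i hi).1.preimage (by continuity)
    have hne : ((fun t : ℤ_[2] => t + x i) ⁻¹' u i).Nonempty :=
      ⟨y i - x i, by simpa using (hu i hi).2⟩
    obtain ⟨z, hz⟩ := PadicInt.denseRange_intCast.exists_mem_open hopen hne
    exact ⟨z, hz⟩
  classical
  set f : ℕ → ℤ := fun i => if h : i ∈ I then (key i h).choose else 0 with hf
  have hsupp : ∀ i, f i ≠ 0 → i ∈ I := by
    intro i hi
    by_contra h
    exact hi (by simp [hf, h])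
  set γ : ℕ →₀ ℤ := Finsupp.onFinset I f hsupp with hγ
  refine ⟨embed γ + x, hpi ?_, ⟨γ, rfl⟩⟩
  intro i hi
  have hfi : f i = (key i hi).choose := by rw [hf]; exact dif_pos hi
  have hei : embed γ i = ((f i : ℤ) : ℤ_[2]) := rfl
  rw [Pi.add_apply, hei, hfi]
  exact (key i hi).choose_spec

/-- Coordinate permutation as a homeomorphism of the product. -/
def permHomeo (e : Equiv.Perm ℕ) : Y ≃ₜ Y where
  toEquiv :=
    { toFun := fun x n => x (e.symm n)
      invFun := fun x n => x (e n)
      left_inv := fun x => funext fun n => by simp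
      right_inv := fun x => funext fun n => by simp }
  continuous_toFun := continuous_pi fun n => continuous_apply _
  continuous_invFun := continuous_pi fun n => continuous_apply _

theorem permHomeo_apply (e : Equiv.Perm ℕ) (_x : Y) (_n : ℕ) :
    permHomeo e _x _n = _x (e.symm _n) := rfl

theorem permHomeo_mul (e₁ e₂ : Equiv.Perm ℕ) :
    permHomeo (e₁ * e₂) = permHomeo e₁ * permHomeo e₂ :=
  Homeomorph.ext fun x => funext fun n => rfl

theorem permHomeo_injective : Function.Injective permHomeo := by
  intro e₁ e₂ h
  have key : ∀ n, e₁.symm n = e₂.symm n := by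
    intro n
    by_contra hne
    classical
    have := congrFun (DFunLike.congr_fun h (fun m => if m = e₁.symm n then (1 : ℤ_[2]) else 0)) n
    rw [permHomeo_apply, permHomeo_apply, if_pos rfl, if_neg (fun hc => hne hc.symm)] at this
    exact one_ne_zero this
  ext n
  have h1 := key (e₁ n)
  rw [Equiv.symm_apply_apply] at h1
  have h2 := congrArg e₂ h1
  rw [Equiv.apply_symm_apply] at h2
  exact h2.symm

end CGNaux

/-- For every countable group `G` there exist a countable free abelian group
`Γ` (a subgroup of `⊕_ℕ ℤ`, formalized as an `AddSubgroup` of `ℕ →₀ ℤ`) and an aperiodic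
minimal Cantor system `(X,S,Γ)` such that `G` is isomorphic to a subgroup of `Norm(S,Γ)`:
there is an injective group homomorphism from `G` to the homeomorphism group of `X` whose
image consists of normalizing homeomorphisms. -/
theorem countable_group_in_normalizer_of_free_abelian_action
    (G : Type) [Group G] [Countable G] :
    ∃ (Γ : AddSubgroup (ℕ →₀ ℤ)) (C : CantorSys (Multiplicative ↥Γ)),
      (∀ (γ : Multiplicative ↥Γ) (x : C.X), C.act γ x = x → γ = 1) ∧
      (∀ x : C.X, Dense (Set.range fun γ : Multiplicative ↥Γ => C.act γ x)) ∧
      ∃ ρ : G →* (C.X ≃ₜ C.X), Function.Injective ρ ∧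
        ∀ g : G, ∃ α : Multiplicative ↥Γ ≃* Multiplicative ↥Γ,
          ∀ (γ : Multiplicative ↥Γ) (x : C.X), ρ g (C.act γ x) = C.act (α γ) (ρ g x) := by
  classical
  open CGNaux in
  refine ⟨⊤, ?_⟩
  -- the action of `Multiplicative ↥⊤` on `Y` by translations
  set act : Multiplicative ↥(⊤ : AddSubgroup (ℕ →₀ ℤ)) →* (CGNaux.Y ≃ₜ CGNaux.Y) :=
    MonoidHom.mk' (fun γ => Homeomorph.addLeft (CGNaux.embed (γ.toAdd : ℕ →₀ ℤ)))
      (by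
        intro a b
        refine Homeomorph.ext fun x => ?_
        show CGNaux.embed (((a * b).toAdd : ↥(⊤ : AddSubgroup (ℕ →₀ ℤ))) : ℕ →₀ ℤ) + x
            = CGNaux.embed (a.toAdd : ℕ →₀ ℤ) + (CGNaux.embed (b.toAdd : ℕ →₀ ℤ) + x)
        rw [← add_assoc, ← map_add]
        rfl) with hact
  refine ⟨⟨CGNaux.Y, act⟩, ?_, ?_, ?_⟩
  · -- aperiodicity
    intro γ x h
    have h1 : CGNaux.embed (γ.toAdd : ℕ →₀ ℤ) + x = x := h
    have h2 : CGNaux.embed (γ.toAdd : ℕ →₀ ℤ) = 0 := by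
      have := congrArg (fun t => t - x) h1
      simpa using this
    have h3 : (γ.toAdd : ℕ →₀ ℤ) = 0 := CGNaux.embed_injective (by simpa using h2)
    have : γ.toAdd = 0 := Subtype.ext h3
    exact this
  · -- minimality
    intro x
    have hd := CGNaux.dense_orbit x
    rw [dense_iff_inter_open] at hd ⊢
    intro U hU hne
    obtain ⟨p, hpU, γ, hγ⟩ := hd U hU hne
    exact ⟨p, hpU, Multiplicative.ofAdd ⟨γ, trivial⟩, hγ⟩
  · -- the normalizing copy of G
    obtain ⟨f, hf⟩ := Countable.exists_injective_nat G
    set σ : G →* Equiv.Perm ℕ :=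
      (Equiv.Perm.viaEmbeddingHom ⟨f, hf⟩).comp (MulAction.toPermHom G G) with hσ
    have hσinj : Function.Injective σ :=
      (Equiv.Perm.viaEmbeddingHom_injective ⟨f, hf⟩).comp MulAction.toPerm_injective
    set ρ : G →* (CGNaux.Y ≃ₜ CGNaux.Y) :=
      MonoidHom.mk' (fun g => CGNaux.permHomeo (σ g))
        (fun a b => by
          show CGNaux.permHomeo (σ (a * b)) = CGNaux.permHomeo (σ a) * CGNaux.permHomeo (σ b)
          rw [map_mul, CGNaux.permHomeo_mul]) with hρ
    refine ⟨ρ, fun a b hab => hσinj (CGNaux.permHomeo_injective hab), ?_⟩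
    intro g
    set e : Equiv.Perm ℕ := σ g with he
    refine ⟨AddEquiv.toMultiplicative
      ((AddSubgroup.topEquiv.trans (Finsupp.domCongr (e : ℕ ≃ ℕ))).trans
        AddSubgroup.topEquiv.symm), ?_⟩
    intro γ x
    funext n
    show (CGNaux.embed (γ.toAdd : ℕ →₀ ℤ) + x) (e.symm n)
        = CGNaux.embed ((Finsupp.equivMapDomain (e : ℕ ≃ ℕ) (γ.toAdd : ℕ →₀ ℤ))) n
          + x (e.symm n)
    rw [Pi.add_apply, CGNaux.embed_apply, CGNaux.embed_apply,
      Finsupp.equivMapDomain_apply]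
end

section
/- Let (X,T,Γ) be an aperiodic minimal Cantor system, where Γ is a countable group. Then there exists a minimal Cantor ℤ-system (Y,S,ℤ) such that Aut(T,Γ) is isomorphic to a subgroup of Aut(S,ℤ). -/
open TopologicalSpace

/-- The centralizer `Aut(T,Γ)` of an action `T` of `Γ` by homeomorphisms: the subgroup of
self-homeomorphisms commuting with every `T γ`. -/
def centralizerSub {X : Type*} [TopologicalSpace X] {Γ : Type*} [Group Γ]
    (T : Γ →* (X ≃ₜ X)) : Subgroup (X ≃ₜ X) where
  carrier := {h | ∀ (γ : Γ) (x : X), h (T γ x) = T γ (h x)}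
  one_mem' := fun _ _ => rfl
  mul_mem' := by
    intro a b ha hb γ x
    show a (b (T γ x)) = T γ (a (b x))
    rw [hb, ha]
  inv_mem' := by
    intro a ha γ x
    apply a.injective
    show a (a.symm (T γ x)) = a (T γ (a.symm x))
    rw [ha, a.apply_symm_apply, a.apply_symm_apply]

/-- A Cantor `ℤ`-system: a homeomorphism of a Cantor set. -/
structure CantorZSys where
  X : Type
  [topX : TopologicalSpace X]
  [compactX : CompactSpace X]
  [metrX : MetrizableSpace X]
  [tdX : TotallyDisconnectedSpace X]
  [perfX : PerfectSpace X]
  [neX : Nonempty X]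
  S : X ≃ₜ X

attribute [instance] CantorZSys.topX CantorZSys.compactX CantorZSys.metrX CantorZSys.tdX
  CantorZSys.perfX CantorZSys.neX


namespace CEZC

def PP (s : ℕ) : ℤ := 16 ^ (s+1)
def uu (s : ℕ) : ℤ := 2 * 16 ^ s
def vv (s : ℕ) : ℤ := 13 * 16 ^ s
def cc (s : ℕ) : ℤ := 12 * 16 ^ s

def zone (s : ℕ) (k : ℤ) : Prop := uu s < k % PP s ∧ k % PP s ≤ vv s

instance zone.dec (s : ℕ) (k : ℤ) : Decidable (zone s k) := by
  unfold zone; infer_instance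

lemma pow16_pos (s : ℕ) : (0:ℤ) < 16 ^ s := by positivity

lemma succ_le_pow16 (s : ℕ) : (s:ℤ) + 1 ≤ 16 ^ s := by
  induction s with
  | zero => norm_num
  | succ n ih =>
    have h : (0:ℤ) < 16 ^ n := pow16_pos n
    push_cast
    calc (n:ℤ) + 1 + 1 ≤ 16 ^ n + 16 ^ n := by linarith
    _ ≤ 16 ^ (n+1) := by rw [pow_succ]; nlinarith

lemma PP_pos (s : ℕ) : 0 < PP s := by unfold PP; positivity

lemma pow16_mono {s t : ℕ} (h : s ≤ t) : (16:ℤ) ^ s ≤ 16 ^ t :=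
  pow_le_pow_right₀ (by norm_num) h

lemma PP_dvd_PP {s t : ℕ} (h : s ≤ t) : PP s ∣ PP t :=
  pow_dvd_pow 16 (by omega)

lemma PP_dvd_cc {t s : ℕ} (h : t < s) : PP t ∣ cc s :=
  Dvd.dvd.mul_left (pow_dvd_pow 16 (by omega)) 12

lemma PP_dvd_uu {s t : ℕ} (h : s < t) : PP s ∣ uu t :=
  Dvd.dvd.mul_left (pow_dvd_pow 16 (by omega)) 2

lemma PP_dvd_vv {s t : ℕ} (h : s < t) : PP s ∣ vv t :=
  Dvd.dvd.mul_left (pow_dvd_pow 16 (by omega)) 13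

/-- a residue congruent to `cc s` mod `PP s` cannot be within `s+1` of one congruent to 0. -/
lemma keyGap {s : ℕ} {r q : ℤ} (hr : r % PP s = cc s) (hq : q % PP s = 0)
    (h : |r - q| ≤ (s:ℤ) + 1) : False := by
  have hd : (r - q) % PP s = cc s := by
    rw [Int.sub_emod, hr, hq, sub_zero]
    exact Int.emod_eq_of_lt (by unfold cc; positivity)
      (by unfold cc PP; rw [pow_succ]; nlinarith [pow16_pos s])
  set d := r - q with hdef
  have h1 : d = PP s * (d / PP s) + cc s := by
    conv_lhs => rw [← Int.mul_ediv_add_emod d (PP s)]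
    rw [hd]
  have h2 : (s:ℤ) + 1 ≤ 16 ^ s := succ_le_pow16 s
  rcases le_or_gt 0 (d / PP s) with hz | hz
  · have : cc s ≤ d := by nlinarith [PP_pos s]
    have : d ≤ (s:ℤ) + 1 := (abs_le.mp h).2
    unfold cc at *; nlinarith [pow16_pos s]
  · have hz' : d / PP s ≤ -1 := by omega
    have : d ≤ -(PP s) + cc s := by nlinarith [PP_pos s]
    have : -((s:ℤ)+1) ≤ d := (abs_le.mp h).1
    unfold cc PP at *
    rw [pow_succ] at *
    nlinarith [pow16_pos s]

/-- any element of a zone is large. -/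
lemma zone_large {t : ℕ} {j : ℤ} (h : zone t j) : 2 * 16 ^ t < |j| := by
  obtain ⟨h1, h2⟩ := h
  rcases le_or_gt 0 j with hj | hj
  · rw [abs_of_nonneg hj]
    have hr : j % PP t ≤ j := by
      have h3 : 0 ≤ j / PP t := Int.ediv_nonneg hj (le_of_lt (PP_pos t))
      have := Int.mul_ediv_add_emod j (PP t)
      nlinarith [PP_pos t]
    unfold uu at h1; linarith
  · rw [abs_of_neg hj]
    have h3 : j / PP t ≤ -1 := by
      by_contra hcon
      push_neg at hcon
      have h4 : 0 ≤ j / PP t := by omega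
      have := Int.mul_ediv_add_emod j (PP t)
      have h5 : 0 ≤ j % PP t := Int.emod_nonneg j (ne_of_gt (PP_pos t))
      nlinarith [PP_pos t]
    have := Int.mul_ediv_add_emod j (PP t)
    have h6 : PP t - vv t ≤ -j := by nlinarith [PP_pos t]
    unfold PP vv at h6
    rw [pow_succ] at h6
    nlinarith [pow16_pos t]

lemma zone_lt_natAbs {t : ℕ} {j : ℤ} (h : zone t j) : t < j.natAbs := by
  have h1 := zone_large h
  have h2 := succ_le_pow16 t
  have h3 : (j.natAbs : ℤ) = |j| := Int.abs_eq_natAbs j ▸ rfl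
  have : (t:ℤ) < (j.natAbs : ℤ) := by rw [h3]; nlinarith [pow16_pos t]
  exact_mod_cast this

/-- (e) lower stages are inactive at `k ≡ cc s`. -/
lemma not_zone_lower {t s : ℕ} (ht : t < s) {k : ℤ} (hk : k % PP s = cc s) :
    ¬ zone t k := by
  intro hz
  have h1 : k % PP t = 0 := by
    have := Int.emod_emod_of_dvd k (PP_dvd_PP (le_of_lt ht))
    rw [hk] at this
    rw [← this, Int.emod_eq_zero_of_dvd (PP_dvd_cc ht)]
  unfold zone at hz
  rw [h1] at hz
  exact absurd hz.1 (not_lt.mpr (le_of_lt (by unfold uu; positivity)))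

/-- (a) for lower stages, `k + j ≡ j`. -/
lemma zone_lower_iff {t s : ℕ} (ht : t < s) {k j : ℤ} (hk : k % PP s = cc s) :
    (zone t (k + j) ↔ zone t j) := by
  have h1 : k % PP t = 0 := by
    have := Int.emod_emod_of_dvd k (PP_dvd_PP (le_of_lt ht))
    rw [hk] at this
    rw [← this, Int.emod_eq_zero_of_dvd (PP_dvd_cc ht)]
  have h2 : (k + j) % PP t = j % PP t := by
    rw [Int.add_emod, h1, zero_add, Int.emod_emod_of_dvd _ dvd_rfl]
  unfold zone
  rw [h2]

lemma zone_of_cc {s : ℕ} {k : ℤ} (hk : k % PP s = cc s) : zone s k := by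
  unfold zone
  rw [hk]
  constructor
  · unfold uu cc; nlinarith [pow16_pos s]
  · unfold vv cc; nlinarith [pow16_pos s]

/-- (b) stage `s` itself stays active on the window. -/
lemma zone_center {s : ℕ} {k j : ℤ} (hk : k % PP s = cc s) (hj : |j| ≤ (s:ℤ)+1) :
    (k + j) % PP s = cc s + j ∧ zone s (k + j) := by
  have h2 := succ_le_pow16 s
  have habs := abs_le.mp hj
  have hccmod : cc s % PP s = cc s := Int.emod_eq_of_lt (by unfold cc; positivity)
    (by unfold cc PP; rw [pow_succ]; nlinarith [pow16_pos s])
  have h3 : (k + j) % PP s = (cc s + j) % PP s := by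
    rw [Int.add_emod, hk, Int.add_emod (cc s) j, hccmod]
  have h4 : (k + j) % PP s = cc s + j := by
    rw [h3]
    apply Int.emod_eq_of_lt
    · unfold cc; nlinarith [pow16_pos s]
    · unfold cc PP; rw [pow_succ]; nlinarith [pow16_pos s]
  refine ⟨h4, ?_, ?_⟩
  · rw [h4]; unfold uu cc; nlinarith [pow16_pos s]
  · rw [h4]; unfold vv cc; nlinarith [pow16_pos s]

/-- (c) deep stages are unaffected by a small shift. -/
lemma zone_deep_iff {t s : ℕ} (ht : s < t) {k j : ℤ} (hk : k % PP s = cc s)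
    (hj : |j| ≤ (s:ℤ)+1) : (zone t (k + j) ↔ zone t k) := by
  have habs := abs_le.mp hj
  have h2 := succ_le_pow16 s
  set r := k % PP t with hrdef
  have hr0 : 0 ≤ r := Int.emod_nonneg k (ne_of_gt (PP_pos t))
  have hrP : r < PP t := Int.emod_lt_of_pos k (PP_pos t)
  have hrs : r % PP s = cc s := by
    rw [hrdef, Int.emod_emod_of_dvd k (PP_dvd_PP (le_of_lt ht)), hk]
  -- r ≥ cc s
  have hrcc : cc s ≤ r := by
    have h1 : r = PP s * (r / PP s) + cc s := by
      conv_lhs => rw [← Int.mul_ediv_add_emod r (PP s)]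
      rw [hrs]
    rcases le_or_gt 0 (r / PP s) with hz | hz
    · nlinarith [PP_pos s]
    · have : r / PP s ≤ -1 := by omega
      have : r ≤ -(PP s) + cc s := by nlinarith [PP_pos s]
      unfold cc PP at *
      exfalso
      rw [pow_succ] at *
      nlinarith [pow16_pos s]
  have hccbig : (s:ℤ) + 1 < cc s := by unfold cc; nlinarith [pow16_pos s]
  -- no wraparound: (k+j) % PP t = r + j
  have hup : r + j < PP t := by
    by_contra hcon
    push_neg at hcon
    have : |r - PP t| ≤ (s:ℤ)+1 := by
      rw [abs_le]
      constructor <;> linarith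
    exact keyGap hrs (Int.emod_eq_zero_of_dvd (PP_dvd_PP (le_of_lt ht))) this
  have hlow : 0 ≤ r + j := by linarith
  have hrr : r % PP t = r := Int.emod_eq_of_lt hr0 hrP
  have hmod : (k + j) % PP t = r + j := by
    have h9 : (k + j) % PP t = (r + j) % PP t := by
      conv_lhs => rw [Int.add_emod k j (PP t)]
      conv_rhs => rw [Int.add_emod r j (PP t)]
      rw [← hrdef, hrr]
    rw [h9]
    exact Int.emod_eq_of_lt hlow hup
  have huu0 : uu t % PP s = 0 := Int.emod_eq_zero_of_dvd (PP_dvd_uu ht)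
  have hvv0 : vv t % PP s = 0 := Int.emod_eq_zero_of_dvd (PP_dvd_vv ht)
  unfold zone
  rw [hmod, ← hrdef]
  constructor
  · rintro ⟨h5, h6⟩
    constructor
    · by_contra hcon
      push_neg at hcon
      exact keyGap hrs huu0 (by rw [abs_le]; constructor <;> linarith)
    · by_contra hcon
      push_neg at hcon
      exact keyGap hrs hvv0 (by rw [abs_le]; constructor <;> linarith)
  · rintro ⟨h5, h6⟩
    constructor
    · by_contra hcon
      push_neg at hcon
      exact keyGap hrs huu0 (by rw [abs_le]; constructor <;> linarith)
    · by_contra hcon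
      push_neg at hcon
      exact keyGap hrs hvv0 (by rw [abs_le]; constructor <;> linarith)

/-- (d) deep stages are never active on the small window around 0. -/
lemma not_zone_deep_small {t s : ℕ} (ht : s ≤ t) {j : ℤ} (hj : |j| ≤ (s:ℤ)+1) :
    ¬ zone t j := by
  intro hz
  have h1 := zone_large hz
  have h2 := succ_le_pow16 s
  have h3 : (16:ℤ)^s ≤ 16^t := pow16_mono ht
  nlinarith [pow16_pos s]

section Word

variable {G : Type*} [Group G]

/-- truncated word -/
def wwN (τ : ℕ → G) (N : ℕ) (k : ℤ) : G :=
  (((List.range N).filter fun s => decide (zone s k)).map τ).prod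

/-- the word `w`. -/
def ww (τ : ℕ → G) (k : ℤ) : G := wwN τ k.natAbs k

lemma wwN_stable (τ : ℕ → G) {N N' : ℕ} (h : N ≤ N') {k : ℤ}
    (hz : ∀ t, N ≤ t → ¬ zone t k) : wwN τ N' k = wwN τ N k := by
  unfold wwN
  obtain ⟨M, rfl⟩ : ∃ M, N' = N + M := ⟨N' - N, by omega⟩
  rw [List.range_add, List.filter_append, List.map_append, List.prod_append]
  have he : (List.map (fun x => N + x) (List.range M)).filter
      (fun s => decide (zone s k)) = [] := by
    rw [List.filter_eq_nil_iff]
    intro a ha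
    simp only [List.mem_map, List.mem_range] at ha
    obtain ⟨x, _, rfl⟩ := ha
    simpa using hz (N + x) (by omega)
  rw [he]
  simp

lemma ww_eq_wwN (τ : ℕ → G) {N : ℕ} {k : ℤ} (h : k.natAbs ≤ N) :
    ww τ k = wwN τ N k := by
  unfold ww
  rw [wwN_stable τ h]
  intro t ht hz
  exact absurd (zone_lt_natAbs hz) (by omega)

lemma ww_zero (τ : ℕ → G) : ww τ 0 = 1 := rfl

/-- the main multiplicative structure of the word. -/
lemma ww_add (τ : ℕ → G) (s : ℕ) {k j : ℤ} (hk : k % PP s = cc s)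
    (hj : |j| ≤ (s:ℤ)+1) : ww τ (k + j) = ww τ j * ww τ k := by
  set N := (k+j).natAbs + k.natAbs + j.natAbs + s + 1 with hN
  rw [ww_eq_wwN τ (show (k+j).natAbs ≤ N by omega),
      ww_eq_wwN τ (show j.natAbs ≤ N by omega),
      ww_eq_wwN τ (show k.natAbs ≤ N by omega)]
  unfold wwN
  obtain ⟨M, hM⟩ : ∃ M, N = s + (M + 1) := ⟨N - s - 1, by omega⟩
  rw [hM, List.range_add, List.filter_append, List.map_append, List.prod_append,
      List.filter_append, List.map_append, List.prod_append,
      List.filter_append, List.map_append, List.prod_append]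
  have c1 : (List.range s).filter (fun t => decide (zone t (k+j)))
      = (List.range s).filter (fun t => decide (zone t j)) := by
    apply List.filter_congr
    intro t ht
    simp only [List.mem_range] at ht
    simp only [decide_eq_decide]
    exact zone_lower_iff ht hk
  have c2 : ((List.range (M+1)).map (fun x => s + x)).filter
        (fun t => decide (zone t (k+j)))
      = ((List.range (M+1)).map (fun x => s + x)).filter
        (fun t => decide (zone t k)) := by
    apply List.filter_congr
    intro t ht
    simp only [List.mem_map, List.mem_range] at ht
    obtain ⟨x, _, rfl⟩ := ht
    simp only [decide_eq_decide]
    rcases Nat.eq_zero_or_pos x with hx | hx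
    · subst hx
      simp only [Nat.add_zero]
      constructor
      · intro _; exact zone_of_cc hk
      · intro _; exact (zone_center hk hj).2
    · exact zone_deep_iff (by omega) hk hj
  have c3 : ((List.range (M+1)).map (fun x => s + x)).filter
      (fun t => decide (zone t j)) = [] := by
    rw [List.filter_eq_nil_iff]
    intro a ha
    simp only [List.mem_map, List.mem_range] at ha
    obtain ⟨x, _, rfl⟩ := ha
    simpa using not_zone_deep_small (by omega) hj
  have c4 : (List.range s).filter (fun t => decide (zone t k)) = [] := by
    rw [List.filter_eq_nil_iff]
    intro a ha
    simp only [List.mem_range] at ha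
    simpa using not_zone_lower ha hk
  rw [c1, c2, c3, c4]
  simp

lemma cc_mod_self (s : ℕ) : cc s % PP s = cc s :=
  Int.emod_eq_of_lt (by unfold cc; positivity)
    (by unfold cc PP; rw [pow_succ]; nlinarith [pow16_pos s])

/-- the word takes the target value at the center. -/
lemma ww_cc (τ : ℕ → G) (s : ℕ) : ww τ (cc s) = τ s := by
  have h1 : ∀ t, s + 1 ≤ t → ¬ zone t (cc s) := by
    intro t ht hz
    have h2 : cc s % PP t = cc s := Int.emod_eq_of_lt (by unfold cc; positivity)
      (by
        have h3 : (16:ℤ)^(s+2) ≤ 16^(t+1) := pow16_mono (by omega)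
        unfold cc PP
        have : (16:ℤ)^(s+2) = 256 * 16^s := by ring
        nlinarith [pow16_pos s])
    unfold zone at hz
    rw [h2] at hz
    have h4 : (16:ℤ)^(s+1) ≤ 16^t := pow16_mono (by omega)
    have h5 : (16:ℤ)^(s+1) = 16 * 16^s := by ring
    unfold uu cc at hz
    nlinarith [pow16_pos s, hz.1]
  have h0 : (cc s).natAbs ≤ (cc s).natAbs + s + 1 := by omega
  rw [ww_eq_wwN τ h0, wwN_stable τ (show s+1 ≤ (cc s).natAbs + s + 1 by omega) h1]
  unfold wwN
  have : List.range (s+1) = List.range s ++ [s] := by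
    rw [List.range_add]
    norm_num [List.range_succ]
  rw [this, List.filter_append, List.map_append, List.prod_append]
  have c4 : (List.range s).filter (fun t => decide (zone t (cc s))) = [] := by
    rw [List.filter_eq_nil_iff]
    intro a ha
    simp only [List.mem_range] at ha
    simpa using not_zone_lower ha (cc_mod_self s)
  have c5 : [s].filter (fun t => decide (zone t (cc s))) = [s] := by
    simp only [List.filter_cons, List.filter_nil]
    rw [if_pos]
    simp only [decide_eq_true_eq]
    exact zone_of_cc (cc_mod_self s)
  rw [c4, c5]
  simp

end Word

end CEZC

section Dyn

lemma homeo_mul_apply {X : Type*} [TopologicalSpace X] (f g : X ≃ₜ X) (x : X) :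
    (f * g) x = f (g x) := rfl

lemma homeo_one_apply {X : Type*} [TopologicalSpace X] (x : X) :
    (1 : X ≃ₜ X) x = x := rfl

variable (X : Type*) [TopologicalSpace X]

/-- the shift on `ℤ → X`. -/
def shiftE : (ℤ → X) ≃ₜ (ℤ → X) where
  toFun y := fun j => y (j+1)
  invFun y := fun j => y (j-1)
  left_inv y := funext fun j => by simp
  right_inv y := funext fun j => by simp
  continuous_toFun := continuous_pi fun j => continuous_apply (j+1)
  continuous_invFun := continuous_pi fun j => continuous_apply (j-1)

variable {X}

lemma shift_zpow : ∀ (n : ℤ) (y : ℤ → X) (j : ℤ), ((shiftE X) ^ n) y j = y (j + n) := by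
  intro n
  induction n using Int.induction_on with
  | zero => intro y j; rw [zpow_zero, homeo_one_apply, add_zero]
  | succ n ih =>
    intro y j
    rw [show ((n:ℤ)+1) = (n:ℤ)+1 from rfl, zpow_add_one, homeo_mul_apply, ih]
    show y (j + (n:ℤ) + 1) = y (j + ((n:ℤ)+1))
    ring_nf
  | pred n ih =>
    intro y j
    rw [show (-(n:ℤ)-1) = -(n:ℤ)-1 from rfl, zpow_sub_one, homeo_mul_apply, ih]
    show y (j + -(n:ℤ) - 1) = y (j + (-(n:ℤ)-1))
    ring_nf

end Dyn

section Main

open CEZC Metric Filter Topology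

/-- helper: uniform choice of small constants over a finite set. -/
lemma finset_exists_pos {α : Type*} (I : Finset α) (p : α → ℝ → Prop)
    (hmono : ∀ a ε ε', 0 < ε' → ε' ≤ ε → p a ε → p a ε')
    (h : ∀ a ∈ I, ∃ ε > 0, p a ε) : ∃ ε > 0, ∀ a ∈ I, p a ε := by
  classical
  induction I using Finset.induction_on with
  | empty => exact ⟨1, one_pos, by simp⟩
  | @insert a s ha ih =>
    obtain ⟨ε₁, hε₁, hp₁⟩ := h a (Finset.mem_insert_self a s)
    obtain ⟨ε₂, hε₂, hp₂⟩ := ih (fun b hb => h b (Finset.mem_insert_of_mem hb))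
    refine ⟨min ε₁ ε₂, lt_min hε₁ hε₂, ?_⟩
    intro b hb
    rcases Finset.mem_insert.mp hb with rfl | hb'
    · exact hmono b ε₁ _ (lt_min hε₁ hε₂) (min_le_left _ _) hp₁
    · exact hmono b ε₂ _ (lt_min hε₁ hε₂) (min_le_right _ _) (hp₂ b hb')

variable {X : Type*} [MetricSpace X]

lemma closure_cyl_out {A : Set (ℤ → X)} {y : ℤ → X} (hy : y ∈ closure A)
    (J : Finset ℤ) {ε : ℝ} (hε : 0 < ε) :
    ∃ a ∈ A, ∀ j ∈ J, dist (a j) (y j) < ε := by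
  have hU : IsOpen ((J : Set ℤ).pi (fun j => ball (y j) ε)) :=
    isOpen_set_pi J.finite_toSet (fun a _ => isOpen_ball)
  have hyU : y ∈ (J : Set ℤ).pi (fun j => ball (y j) ε) := fun j _ => mem_ball_self hε
  obtain ⟨a, haU, haA⟩ := _root_.mem_closure_iff.mp hy _ hU hyU
  exact ⟨a, haA, fun j hj => by
    have := haU j (by exact_mod_cast hj); rwa [mem_ball] at this⟩

lemma closure_cyl_in {A : Set (ℤ → X)} {y : ℤ → X}
    (h : ∀ (J : Finset ℤ) (ε : ℝ), 0 < ε → ∃ a ∈ A, ∀ j ∈ J, dist (a j) (y j) < ε) :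
    y ∈ closure A := by
  rw [_root_.mem_closure_iff]
  intro o ho hyo
  obtain ⟨I, u, hu, hsub⟩ := isOpen_pi_iff.mp ho y hyo
  obtain ⟨ε, hε, hball⟩ := finset_exists_pos I (fun a ε => ball (y a) ε ⊆ u a)
    (fun a ε ε' h1 h2 h3 => subset_trans (ball_subset_ball h2) h3)
    (fun a ha => Metric.isOpen_iff.mp (hu a ha).1 (y a) (hu a ha).2)
  obtain ⟨a, haA, hd⟩ := h I ε hε
  refine ⟨a, hsub (fun i hi => ?_), haA⟩
  exact hball i (by exact_mod_cast hi) (by rw [mem_ball]; exact hd i (by exact_mod_cast hi))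

variable {Γ : Type*} [Group Γ] (T : Γ →* (X ≃ₜ X)) (τ : ℕ → Γ)

/-- the fundamental path through `x`. -/
def pathP (x : X) : ℤ → X := fun n => T (ww τ n) x

lemma pathP_cont : Continuous (fun x => pathP T τ x) :=
  continuous_pi fun n => (T (ww τ n)).continuous

def orbSet : Set (ℤ → X) := Set.range (fun p : ℤ × X => ((shiftE X) ^ p.1) (pathP T τ p.2))

def Ycl : Set (ℤ → X) := closure (orbSet T τ)

lemma pathP_mem_orbSet (x : X) : pathP T τ x ∈ orbSet T τ := by
  refine ⟨(0, x), ?_⟩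
  show ((shiftE X) ^ (0:ℤ)) (pathP T τ x) = pathP T τ x
  rw [zpow_zero, homeo_one_apply]

lemma pathP_mem_YY (x : X) : pathP T τ x ∈ Ycl T τ :=
  subset_closure (pathP_mem_orbSet T τ x)

variable [CompactSpace X]

lemma unifCont (J : Finset ℤ) {ε : ℝ} (hε : 0 < ε) :
    ∃ δ > 0, ∀ j ∈ J, ∀ a b : X, dist a b < δ → dist (T (ww τ j) a) (T (ww τ j) b) < ε := by
  apply finset_exists_pos J (fun j δ => ∀ a b : X, dist a b < δ → dist (T (ww τ j) a) (T (ww τ j) b) < ε)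
  · intro j δ δ' h1 h2 h3 a b hab
    exact h3 a b (lt_of_lt_of_le hab h2)
  · intro j _
    have huc := CompactSpace.uniformContinuous_of_continuous (T (ww τ j)).continuous
    obtain ⟨δ, hδ, hd⟩ := Metric.uniformContinuous_iff.mp huc ε hε
    exact ⟨δ, hδ, fun a b hab => hd hab⟩

lemma lemG2 (hmin : ∀ x : X, Dense (Set.range fun γ : Γ => T γ x))
    (hτ : ∀ (γ : Γ) (m : ℕ), ∃ s, m ≤ s ∧ τ s = γ) (z x : X) :
    pathP T τ x ∈ closure (Set.range fun n : ℤ => ((shiftE X) ^ n) (pathP T τ z)) := by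
  apply closure_cyl_in
  intro J ε hε
  obtain ⟨δ, hδ, hunif⟩ := unifCont T τ J hε
  obtain ⟨p, ⟨γ, hγ⟩, hpball⟩ := (hmin z).exists_mem_open isOpen_ball ⟨x, mem_ball_self hδ⟩
  obtain ⟨s, hms, hτs⟩ := hτ γ (J.sup Int.natAbs)
  refine ⟨((shiftE X) ^ (cc s)) (pathP T τ z), ⟨cc s, rfl⟩, ?_⟩
  intro j hj
  have hjs : |j| ≤ (s:ℤ) + 1 := by
    have h1 : j.natAbs ≤ J.sup Int.natAbs := Finset.le_sup hj
    rw [Int.abs_eq_natAbs]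
    have : j.natAbs ≤ s + 1 := le_trans h1 (Nat.le_succ_of_le hms)
    exact_mod_cast this
  have hcoord : ((shiftE X) ^ (cc s)) (pathP T τ z) j = T (ww τ j) (T γ z) := by
    rw [shift_zpow]
    show T (ww τ (j + cc s)) z = _
    rw [add_comm j (cc s), ww_add τ s (cc_mod_self s) hjs, map_mul, homeo_mul_apply,
      ww_cc, hτs]
  rw [hcoord]
  show dist (T (ww τ j) (T γ z)) (T (ww τ j) x) < ε
  exact hunif j hj _ _ (by rw [show (T γ) z = p from hγ]; rwa [mem_ball] at hpball)

lemma lemG1 {y : ℤ → X} (hy : y ∈ Ycl T τ) :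
    ∃ z : X, pathP T τ z ∈ closure (Set.range fun n : ℤ => ((shiftE X) ^ n) y) := by
  have step : ∀ m : ℕ, ∃ (n : ℤ) (z : X), ∀ j : ℤ, |j| ≤ (m:ℤ) →
      dist (((shiftE X) ^ n) y j) (T (ww τ j) z) < 1/((m:ℝ)+1) := by
    intro m
    have hεp : (0:ℝ) < 1/((m:ℝ)+1) := by positivity
    obtain ⟨a, haP, hdist⟩ := closure_cyl_out hy (Finset.Icc (-(PP m + m)) (PP m + m)) hεp
    obtain ⟨⟨k, x⟩, rfl⟩ := haP
    set n := (cc m - k) % PP m with hn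
    have hn0 : 0 ≤ n := Int.emod_nonneg _ (ne_of_gt (PP_pos m))
    have hnP : n < PP m := Int.emod_lt_of_pos _ (PP_pos m)
    have hcong : (k + n) % PP m = cc m := by
      rw [hn, Int.add_emod, Int.emod_emod_of_dvd _ dvd_rfl, ← Int.add_emod,
        add_sub_cancel]
      exact cc_mod_self m
    refine ⟨n, T (ww τ (k + n)) x, ?_⟩
    intro j hj
    have habs := abs_le.mp hj
    have hcoord : ((shiftE X) ^ k) (pathP T τ x) (j + n) = T (ww τ j) (T (ww τ (k+n)) x) := by
      rw [shift_zpow]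
      show T (ww τ (j + n + k)) x = _
      have harr : j + n + k = (k + n) + j := by ring
      rw [harr, ww_add τ m hcong (le_trans hj (by push_cast; linarith)), map_mul,
        homeo_mul_apply]
    have hmem : j + n ∈ Finset.Icc (-(PP m + m)) (PP m + m) := by
      rw [Finset.mem_Icc]
      constructor <;> [linarith; linarith]
    have h2 : dist (((shiftE X) ^ k) (pathP T τ x) (j + n)) (y (j + n)) < 1/((m:ℝ)+1) :=
      hdist (j + n) hmem
    rw [hcoord] at h2
    rw [shift_zpow]
    show dist (y (j + n)) _ < _
    rw [dist_comm]
    exact h2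
  choose nseq zseq hseq using step
  obtain ⟨z, -, φ, hφ, hz⟩ := IsCompact.tendsto_subseq isCompact_univ
    (fun m => Set.mem_univ (zseq m))
  refine ⟨z, ?_⟩
  have htend : Tendsto (fun i => ((shiftE X) ^ (nseq (φ i))) y) atTop
      (nhds (pathP T τ z)) := by
    rw [tendsto_pi_nhds]
    intro j
    rw [Metric.tendsto_nhds]
    intro ε hε
    have hc : Tendsto (fun i => T (ww τ j) (zseq (φ i))) atTop
        (nhds (T (ww τ j) z)) := ((T (ww τ j)).continuous.tendsto z).comp hz
    have h1 : ∀ᶠ i in atTop, dist (T (ww τ j) (zseq (φ i))) (T (ww τ j) z) < ε/2 :=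
      Metric.tendsto_nhds.mp hc (ε/2) (by positivity)
    obtain ⟨N, hN⟩ := exists_nat_gt (2/ε)
    have h2 : ∀ᶠ i in atTop, N + j.natAbs ≤ i := eventually_ge_atTop _
    filter_upwards [h1, h2] with i hi1 hi2
    have hφi : N + j.natAbs ≤ φ i := le_trans hi2 hφ.le_apply
    have hjφ : |j| ≤ ((φ i : ℕ) : ℤ) := by
      rw [Int.abs_eq_natAbs]
      exact_mod_cast le_trans (Nat.le_add_left _ _) hφi
    have hsmall : 1/((φ i : ℝ)+1) < ε/2 := by
      rw [div_lt_iff₀ (by positivity)]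
      rw [div_lt_iff₀ hε] at hN
      have : (N:ℝ) ≤ (φ i : ℝ) := by exact_mod_cast le_trans (Nat.le_add_right _ _) hφi
      nlinarith
    calc dist (((shiftE X) ^ (nseq (φ i))) y j) (T (ww τ j) z)
        ≤ dist (((shiftE X) ^ (nseq (φ i))) y j) (T (ww τ j) (zseq (φ i)))
          + dist (T (ww τ j) (zseq (φ i))) (T (ww τ j) z) := dist_triangle _ _ _
      _ < 1/((φ i : ℝ)+1) + ε/2 := add_lt_add (hseq (φ i) j hjφ) hi1
      _ < ε/2 + ε/2 := by linarith
      _ = ε := by ring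
  exact mem_closure_of_tendsto htend (Eventually.of_forall fun i => ⟨nseq (φ i), rfl⟩)

/-- powers of the shift compose as expected. -/
lemma shift_zpow_zpow (a b : ℤ) (y : ℤ → X) :
    ((shiftE X) ^ a) (((shiftE X) ^ b) y) = ((shiftE X) ^ (a + b)) y := by
  rw [← homeo_mul_apply, ← zpow_add]

/-- minimality: from any point of `YY` the shift orbit is dense in `YY`. -/
lemma minimality (hmin : ∀ x : X, Dense (Set.range fun γ : Γ => T γ x))
    (hτ : ∀ (γ : Γ) (m : ℕ), ∃ s, m ≤ s ∧ τ s = γ)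
    {y : ℤ → X} (hy : y ∈ Ycl T τ) :
    Ycl T τ ⊆ closure (Set.range fun n : ℤ => ((shiftE X) ^ n) y) := by
  set O := closure (Set.range fun n : ℤ => ((shiftE X) ^ n) y) with hO
  have hinv : ∀ k : ℤ, ∀ w ∈ O, ((shiftE X) ^ k) w ∈ O := by
    intro k w hw
    have h1 : ((shiftE X) ^ k) '' O ⊆ O := by
      rw [hO, Homeomorph.image_closure]
      apply closure_mono
      rintro - ⟨-, ⟨n, rfl⟩, rfl⟩
      exact ⟨k + n, (shift_zpow_zpow k n y).symm⟩
    exact h1 ⟨w, hw, rfl⟩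
  obtain ⟨z, hz⟩ := lemG1 T τ hy
  have hPx : ∀ x : X, pathP T τ x ∈ O := by
    intro x
    have h2 : Set.range (fun n : ℤ => ((shiftE X) ^ n) (pathP T τ z)) ⊆ O := by
      rintro - ⟨n, rfl⟩
      exact hinv n _ hz
    have h3 := lemG2 T τ hmin hτ z x
    exact (closure_minimal h2 isClosed_closure) h3
  have h4 : orbSet T τ ⊆ O := by
    rintro - ⟨⟨k, x⟩, rfl⟩
    exact hinv k _ (hPx x)
  exact closure_minimal h4 isClosed_closure

end Main

section Invar

open CEZC Metric Filter

variable {X : Type*} [MetricSpace X] [CompactSpace X] {Γ : Type*} [Group Γ]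
  (T : Γ →* (X ≃ₜ X)) (τ : ℕ → Γ)

lemma pathP_zero (x : X) : pathP T τ x 0 = x := by
  show T (ww τ 0) x = x
  rw [ww_zero, map_one, homeo_one_apply]

lemma shift_mem_Ycl {y : ℤ → X} (hy : y ∈ Ycl T τ) (k : ℤ) :
    ((shiftE X) ^ k) y ∈ Ycl T τ := by
  have h1 : ((shiftE X) ^ k) '' orbSet T τ ⊆ orbSet T τ := by
    rintro - ⟨-, ⟨⟨n, x⟩, rfl⟩, rfl⟩
    exact ⟨(k + n, x), (shift_zpow_zpow k n _).symm⟩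
  have h2 : ((shiftE X) ^ k) '' Ycl T τ ⊆ Ycl T τ := by
    unfold Ycl
    rw [Homeomorph.image_closure]
    exact closure_mono h1
  exact h2 ⟨y, hy, rfl⟩

/-- the diagonal action of a homeomorphism of `X` on `ℤ → X`. -/
def diagH (h : X ≃ₜ X) : (ℤ → X) ≃ₜ (ℤ → X) where
  toFun y := fun j => h (y j)
  invFun y := fun j => h.symm (y j)
  left_inv y := funext fun j => h.symm_apply_apply _
  right_inv y := funext fun j => h.apply_symm_apply _
  continuous_toFun := continuous_pi fun j => h.continuous.comp (continuous_apply j)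
  continuous_invFun := continuous_pi fun j => h.symm.continuous.comp (continuous_apply j)

lemma diagH_shift_zpow (h : X ≃ₜ X) (k : ℤ) (y : ℤ → X) :
    diagH h (((shiftE X) ^ k) y) = ((shiftE X) ^ k) (diagH h y) := by
  funext j
  show h ((((shiftE X) ^ k) y) j) = (((shiftE X) ^ k) (diagH h y)) j
  rw [shift_zpow, shift_zpow]
  rfl

lemma diagH_pathP (h : X ≃ₜ X) (hc : h ∈ centralizerSub T) (x : X) :
    diagH h (pathP T τ x) = pathP T τ (h x) := funext fun j => hc _ x

lemma diagH_mem_Ycl (h : X ≃ₜ X) (hc : h ∈ centralizerSub T) {y : ℤ → X}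
    (hy : y ∈ Ycl T τ) : diagH h y ∈ Ycl T τ := by
  have h1 : diagH h '' orbSet T τ ⊆ orbSet T τ := by
    rintro - ⟨-, ⟨⟨n, x⟩, rfl⟩, rfl⟩
    refine ⟨(n, h x), ?_⟩
    show ((shiftE X) ^ n) (pathP T τ (h x)) = diagH h (((shiftE X) ^ n) (pathP T τ x))
    rw [diagH_shift_zpow, diagH_pathP T τ h hc]
  have h2 : diagH h '' Ycl T τ ⊆ Ycl T τ := by
    unfold Ycl
    rw [Homeomorph.image_closure]
    exact closure_mono h1
  exact h2 ⟨y, hy, rfl⟩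

end Invar

section Helpers

/-- restrict a self-homeomorphism to an invariant subset. -/
def restrictHomeo {α : Type*} [TopologicalSpace α] (e : α ≃ₜ α) (A : Set α)
    (h1 : ∀ a ∈ A, e a ∈ A) (h2 : ∀ a ∈ A, e.symm a ∈ A) : A ≃ₜ A where
  toFun a := ⟨e a, h1 a a.2⟩
  invFun a := ⟨e.symm a, h2 a a.2⟩
  left_inv a := Subtype.ext (e.symm_apply_apply _)
  right_inv a := Subtype.ext (e.apply_symm_apply _)
  continuous_toFun := Continuous.subtype_mk (e.continuous.comp continuous_subtype_val) _
  continuous_invFun := Continuous.subtype_mk (e.symm.continuous.comp continuous_subtype_val) _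

@[simp] lemma restrictHomeo_coe {α : Type*} [TopologicalSpace α] (e : α ≃ₜ α) (A : Set α)
    (h1 : ∀ a ∈ A, e a ∈ A) (h2 : ∀ a ∈ A, e.symm a ∈ A) (a : A) :
    (restrictHomeo e A h1 h2 a : α) = e a := rfl

lemma restrictHomeo_zpow {α : Type*} [TopologicalSpace α] (e : α ≃ₜ α) (A : Set α)
    (h1 : ∀ a ∈ A, e a ∈ A) (h2 : ∀ a ∈ A, e.symm a ∈ A) :
    ∀ (n : ℤ) (a : A), (((restrictHomeo e A h1 h2) ^ n) a : α) = (e ^ n) (a : α) := by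
  intro n
  induction n using Int.induction_on with
  | zero => intro a; rw [zpow_zero, zpow_zero]; rfl
  | succ n ih =>
    intro a
    rw [zpow_add_one, zpow_add_one, homeo_mul_apply, homeo_mul_apply, ih]
    rfl
  | pred n ih =>
    intro a
    rw [zpow_sub_one, zpow_sub_one, homeo_mul_apply, homeo_mul_apply, ih]
    rfl

/-- conjugation by a homeomorphism, as a group homomorphism. -/
def homeoConj {α β : Type*} [TopologicalSpace α] [TopologicalSpace β] (e : α ≃ₜ β) :
    (α ≃ₜ α) →* (β ≃ₜ β) where
  toFun g := (e.symm.trans g).trans e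
  map_one' := Homeomorph.ext fun b => e.apply_symm_apply b
  map_mul' g₁ g₂ := Homeomorph.ext fun b => by
    show e (g₁ (g₂ (e.symm b))) = e (g₁ (e.symm (e (g₂ (e.symm b)))))
    rw [e.symm_apply_apply]

lemma homeoConj_apply {α β : Type*} [TopologicalSpace α] [TopologicalSpace β] (e : α ≃ₜ β)
    (g : α ≃ₜ α) (b : β) : homeoConj e g b = e (g (e.symm b)) := rfl

lemma homeoConj_injective {α β : Type*} [TopologicalSpace α] [TopologicalSpace β]
    (e : α ≃ₜ β) : Function.Injective (homeoConj e) := by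
  intro a b hab
  apply Homeomorph.ext
  intro x
  have h1 := congrArg (fun g : β ≃ₜ β => g (e x)) hab
  simp only [homeoConj_apply, e.symm_apply_apply] at h1
  exact e.injective h1

lemma td_of_homeo {α β : Type*} [TopologicalSpace α] [TopologicalSpace β]
    [TotallyDisconnectedSpace α] (e : α ≃ₜ β) : TotallyDisconnectedSpace β := by
  constructor
  intro t _ ht
  have h1 : IsPreconnected (⇑e.symm '' t) := ht.image _ e.symm.continuous.continuousOn
  have h2 : (⇑e.symm '' t).Subsingleton :=
    (TotallyDisconnectedSpace.isTotallyDisconnected_univ) _ (Set.subset_univ _) h1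
  intro x hx y hy
  have := h2 ⟨x, hx, rfl⟩ ⟨y, hy, rfl⟩
  exact e.symm.injective this

lemma perfect_of_homeo {α β : Type*} [TopologicalSpace α] [TopologicalSpace β]
    [PerfectSpace α] (e : α ≃ₜ β) : PerfectSpace β := by
  constructor
  rw [preperfect_iff_nhds]
  intro b _hb U hU
  have h1 : ⇑e ⁻¹' U ∈ nhds (e.symm b) := by
    apply e.continuous.continuousAt
    rwa [e.apply_symm_apply]
  have h2 := preperfect_iff_nhds.mp (PerfectSpace.univ_preperfect (α := α))
  obtain ⟨y, hy, hyne⟩ := h2 (e.symm b) (Set.mem_univ _) _ h1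
  refine ⟨e y, ⟨hy.1, Set.mem_univ _⟩, ?_⟩
  intro hcon
  exact hyne (by rw [← hcon, e.symm_apply_apply])

lemma infinite_of_perfect (α : Type*) [TopologicalSpace α] [T1Space α] [PerfectSpace α]
    [Nonempty α] : Infinite α := by
  rw [← not_finite_iff_infinite]
  intro hfin
  obtain ⟨x⟩ := ‹Nonempty α›
  have h1 : IsOpen ({x} : Set α) := by
    have h2 : ({x}ᶜ : Set α).Finite := Set.toFinite _
    simpa using h2.isClosed.isOpen_compl
  have h2 := preperfect_iff_nhds.mp (PerfectSpace.univ_preperfect (α := α))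
  obtain ⟨y, hy, hyne⟩ := h2 x (Set.mem_univ x) {x} (h1.mem_nhds rfl)
  exact hyne (by simpa using hy.1)

end Helpers

section FinalAux

open CEZC

variable {X : Type*} [MetricSpace X] [CompactSpace X] {Γ : Type*} [Group Γ]
  (T : Γ →* (X ≃ₜ X)) (τ : ℕ → Γ)

@[simp] lemma diagH_apply (h : X ≃ₜ X) (y : ℤ → X) (j : ℤ) : diagH h y j = h (y j) := rfl

end FinalAux

/-- Let `(X,T,Γ)` be an aperiodic minimal Cantor system, `Γ` countable.
Then there is a minimal Cantor `ℤ`-system `(Y,S,ℤ)` such that `Aut(T,Γ)` is isomorphic to a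
subgroup of `Aut(S,ℤ)`: there is an injective group homomorphism from `Aut(T,Γ)` into the
homeomorphism group of `Y` whose image commutes with `S`. -/
theorem centralizer_embeds_in_Z_centralizer
    {X : Type*} [TopologicalSpace X] [CompactSpace X] [MetrizableSpace X]
    [TotallyDisconnectedSpace X] [PerfectSpace X] [Nonempty X]
    {Γ : Type*} [Group Γ] [Countable Γ]
    (T : Γ →* (X ≃ₜ X))
    (hfree : ∀ (γ : Γ) (x : X), T γ x = x → γ = 1)
    (hmin : ∀ x : X, Dense (Set.range fun γ : Γ => T γ x)) :
    ∃ C : CantorZSys,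
      (∀ y : C.X, Dense (Set.range fun n : ℤ => (C.S ^ n) y)) ∧
      ∃ Φ : ↥(centralizerSub T) →* (C.X ≃ₜ C.X),
        Function.Injective Φ ∧
        ∀ (h : ↥(centralizerSub T)) (y : C.X), Φ h (C.S y) = C.S (Φ h y) := by
  classical
  letI : MetricSpace X := TopologicalSpace.metrizableSpaceMetric X
  obtain ⟨en, hen⟩ := exists_surjective_nat Γ
  set τ : ℕ → Γ := fun n => en (Nat.unpair n).1 with hτdef
  have hτ : ∀ (γ : Γ) (m : ℕ), ∃ s, m ≤ s ∧ τ s = γ := by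
    intro γ m
    obtain ⟨a, ha⟩ := hen γ
    refine ⟨Nat.pair a m, Nat.right_le_pair a m, ?_⟩
    rw [hτdef]
    simp only [Nat.unpair_pair]
    exact ha
  set Y : Set (ℤ → X) := Ycl T τ with hYdef
  have hYclosed : IsClosed Y := isClosed_closure
  haveI hYcomp : CompactSpace Y := isCompact_iff_compactSpace.mp hYclosed.isCompact
  haveI : Nonempty X := ‹Nonempty X›
  haveI hYne : Nonempty Y :=
    ⟨⟨pathP T τ (Classical.arbitrary X), pathP_mem_YY T τ (Classical.arbitrary X)⟩⟩
  -- the restricted shift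
  set Ssub : Y ≃ₜ Y := restrictHomeo (shiftE X) Y
    (fun a ha => by
      have h1 := shift_mem_Ycl T τ (y := a) ha 1
      rwa [zpow_one] at h1)
    (fun a ha => by
      have h1 := shift_mem_Ycl T τ (y := a) ha (-1)
      rwa [show ((shiftE X) ^ (-1:ℤ)) a = (shiftE X).symm a from by rw [zpow_neg_one]; rfl]
        at h1) with hSsubdef
  have hSsub_coe : ∀ (n : ℤ) (a : Y), (((Ssub ^ n) a : Y) : ℤ → X)
      = ((shiftE X) ^ n) (a : ℤ → X) := by
    rw [hSsubdef]
    exact restrictHomeo_zpow _ _ _ _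
  -- minimality of the subsystem
  have hdense : ∀ y : Y, Dense (Set.range fun n : ℤ => (Ssub ^ n) y) := by
    intro y b
    rw [closure_subtype]
    have hfg : (Subtype.val ∘ fun n : ℤ => (Ssub ^ n) y)
        = fun n : ℤ => ((shiftE X) ^ n) (y : ℤ → X) := funext fun n => hSsub_coe n y
    have himg : Subtype.val '' (Set.range fun n : ℤ => (Ssub ^ n) y)
        = Set.range fun n : ℤ => ((shiftE X) ^ n) (y : ℤ → X) := by
      rw [← Set.range_comp, hfg]
    rw [himg]
    exact minimality T τ hmin hτ y.2 b.2
  -- infinitude and perfectness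
  haveI hXinf : Infinite X := infinite_of_perfect X
  haveI hYinf : Infinite Y := by
    apply Infinite.of_injective (fun x : X => (⟨pathP T τ x, pathP_mem_YY T τ x⟩ : Y))
    intro a b hab
    have h1 := congrArg (fun q : Y => (q : ℤ → X) 0) hab
    simpa only [pathP_zero] using h1
  haveI hYperf : PerfectSpace Y := by
    constructor
    rw [preperfect_iff_nhds]
    intro y _hy U hU
    by_contra hcon
    push_neg at hcon
    obtain ⟨V, hVU, hVopen, hyV⟩ := mem_nhds_iff.mp hU
    have hVsing : V = {y} := by
      apply Set.Subset.antisymm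
      · intro v hv
        exact hcon v ⟨hVU hv, Set.mem_univ _⟩
      · simpa using hyV
    have hopen : IsOpen ({y} : Set Y) := hVsing ▸ hVopen
    have hcover : ∀ z : Y, ∃ n : ℤ, z ∈ ({(Ssub ^ n) y} : Set Y) := by
      intro z
      obtain ⟨p, hps, hp⟩ := (hdense z).exists_mem_open hopen ⟨y, rfl⟩
      obtain ⟨n, hn⟩ := hps
      have hpy : (Ssub ^ n) z = y := by
        have hn' : (Ssub ^ n) z = p := hn
        rw [hn']
        exact hp
      refine ⟨-n, ?_⟩
      have hzz : (Ssub ^ (-n)) ((Ssub ^ n) z) = z := by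
        rw [← homeo_mul_apply, ← zpow_add, neg_add_cancel, zpow_zero, homeo_one_apply]
      rw [Set.mem_singleton_iff, ← hpy, hzz]
    have hopen2 : ∀ n : ℤ, IsOpen ({(Ssub ^ n) y} : Set Y) := by
      intro n
      have h1 := (Ssub ^ n).isOpenMap _ hopen
      rwa [Set.image_singleton] at h1
    obtain ⟨t, ht⟩ := isCompact_univ.elim_finite_subcover
      (fun n : ℤ => ({(Ssub ^ n) y} : Set Y)) hopen2
      (by
        intro z _
        rw [Set.mem_iUnion]
        exact hcover z)
    have hfin : (Set.univ : Set Y).Finite := by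
      apply Set.Finite.subset ?_ ht
      exact Set.Finite.biUnion t.finite_toSet (fun n _ => Set.finite_singleton _)
    exact absurd (Set.finite_univ_iff.mp hfin) (not_finite_iff_infinite.mpr hYinf)
  -- the action of the centralizer on Y
  have hsymm_mem : ∀ (h : ↥(centralizerSub T)) (a : ℤ → X), a ∈ Y →
      (diagH ((h : X ≃ₜ X))).symm a ∈ Y := by
    intro h a ha
    have hinv : ((h : X ≃ₜ X))⁻¹ ∈ centralizerSub T := inv_mem h.2
    have h1 : (diagH ((h : X ≃ₜ X))).symm a = diagH (((h : X ≃ₜ X))⁻¹) a := rfl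
    rw [h1]
    exact diagH_mem_Ycl T τ _ hinv ha
  set Φ₀ : ↥(centralizerSub T) →* (Y ≃ₜ Y) :=
    { toFun := fun h => restrictHomeo (diagH ((h : X ≃ₜ X))) Y
        (fun a ha => diagH_mem_Ycl T τ _ h.2 ha)
        (fun a ha => hsymm_mem h a ha),
      map_one' := Homeomorph.ext fun a => Subtype.ext rfl,
      map_mul' := fun h₁ h₂ => Homeomorph.ext fun a => Subtype.ext rfl } with hΦ₀def
  have hΦ₀inj : Function.Injective Φ₀ := by
    intro h₁ h₂ heq
    apply Subtype.ext
    apply Homeomorph.ext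
    intro x
    have h1 := congrArg
      (fun F : Y ≃ₜ Y => ((F (⟨pathP T τ x, pathP_mem_YY T τ x⟩ : Y)) : ℤ → X) 0) heq
    simpa only [hΦ₀def, MonoidHom.coe_mk, OneHom.coe_mk, restrictHomeo_coe, diagH_apply,
      pathP_zero] using h1
  have hcomm : ∀ (h : ↥(centralizerSub T)) (y : Y), Φ₀ h (Ssub y) = Ssub (Φ₀ h y) := by
    intro h y
    apply Subtype.ext
    rfl
  -- transport to a Type-0 Cantor space
  obtain ⟨u, hu⟩ := TopologicalSpace.exists_dense_seq X
  set f : X → ℕ → ℝ := fun x n => dist x (u n) with hfdef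
  have hfc : Continuous f := continuous_pi fun n => Continuous.dist continuous_id continuous_const
  have hfinj : Function.Injective f := by
    intro a b hab
    by_contra hne
    have hd : 0 < dist a b := dist_pos.mpr hne
    obtain ⟨n, hp⟩ := hu.exists_mem_open
      (show IsOpen (Metric.ball a (dist a b / 2)) from Metric.isOpen_ball)
      ⟨a, Metric.mem_ball_self (by linarith)⟩
    have h1 : dist a (u n) = dist b (u n) := congrFun hab n
    rw [Metric.mem_ball] at hp
    have h2 : dist a b ≤ dist a (u n) + dist (u n) b := dist_triangle _ _ _
    rw [dist_comm (u n) b, ← h1] at h2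
    rw [dist_comm (u n) a] at hp
    linarith
  set g : (ℤ → X) → (ℤ → ℕ → ℝ) := fun y i => f (y i) with hgdef
  have hgc : Continuous g := continuous_pi fun i => hfc.comp (continuous_apply i)
  have hginj : Function.Injective g := by
    intro y₁ y₂ h12
    funext i
    exact hfinj (congrFun h12 i)
  set Y₀ : Set (ℤ → ℕ → ℝ) := g '' Y with hY₀def
  have hbij : Function.Bijective (fun a : Y => (⟨g a, ⟨a, a.2, rfl⟩⟩ : Y₀)) := by
    constructor
    · intro a b hab
      exact Subtype.ext (hginj (congrArg Subtype.val hab))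
    · rintro ⟨-, ⟨a, ha, rfl⟩⟩
      exact ⟨⟨a, ha⟩, rfl⟩
  have heqc : Continuous (Equiv.ofBijective _ hbij) :=
    Continuous.subtype_mk (hgc.comp continuous_subtype_val) _
  set eY : Y ≃ₜ Y₀ := Continuous.homeoOfEquivCompactToT2 heqc with heYdef
  haveI : CompactSpace Y₀ := Homeomorph.compactSpace eY
  haveI : TotallyDisconnectedSpace Y₀ := td_of_homeo eY
  haveI : PerfectSpace Y₀ := perfect_of_homeo eY
  haveI : Nonempty Y₀ := ⟨eY (Classical.arbitrary Y)⟩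
  set S₀ : Y₀ ≃ₜ Y₀ := homeoConj eY Ssub with hS₀def
  refine ⟨{ X := ↥Y₀, S := S₀ }, ?_, (homeoConj eY).comp Φ₀, ?_, ?_⟩
  · -- minimality
    intro y₀
    have h1 : ∀ n : ℤ, (S₀ ^ n) y₀ = eY ((Ssub ^ n) (eY.symm y₀)) := by
      intro n
      rw [hS₀def, ← map_zpow]
      rfl
    have hfg2 : (⇑eY ∘ fun n : ℤ => (Ssub ^ n) (eY.symm y₀))
        = fun n : ℤ => (S₀ ^ n) y₀ := funext fun n => (h1 n).symm
    have h2 : (Set.range fun n : ℤ => (S₀ ^ n) y₀)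
        = ⇑eY '' (Set.range fun n : ℤ => (Ssub ^ n) (eY.symm y₀)) := by
      rw [← Set.range_comp, hfg2]
    rw [h2]
    have h3 := hdense (eY.symm y₀)
    rw [dense_iff_closure_eq] at h3 ⊢
    rw [← Homeomorph.image_closure, h3, Set.image_univ]
    exact eY.surjective.range_eq
  · -- injectivity
    exact (homeoConj_injective eY).comp hΦ₀inj
  · -- commutation
    intro h y₀
    show homeoConj eY (Φ₀ h) (S₀ y₀) = S₀ (homeoConj eY (Φ₀ h) y₀)
    rw [hS₀def]
    simp only [homeoConj_apply, Homeomorph.symm_apply_apply]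
    rw [hcomm h (eY.symm y₀)]
end

section
/- With X, T, (S_n)_n, (τ_n)_n as in the context: for every nonempty open set V ⊆ X there is an n ∈ ℕ such that for every letter a ∈ X, every k ≥ n and every i ≥ 0, at least one letter of the word τ_i∘τ_{i+1}∘⋯∘τ_{k+i}(a) lies in V. -/
open TopologicalSpace

variable {X : Type*} [TopologicalSpace X] {Γ : Type*} [Group Γ]

/-- The word `τ_n(x) = T^{s_1}(x) ⋯ T^{s_{d_n}}(x)` of the generalized substitution `τ_n`,
where `S_n = {s 0, …, s (d n - 1)}` (0-indexed) and `s 0 = 1`. -/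
def tauWord (T : Γ →* (X ≃ₜ X)) (s : ℕ → Γ) (d : ℕ → ℕ) (n : ℕ) (x : X) : List X :=
  List.ofFn fun i : Fin (d n) => T (s i.val) x

/-- The word `τ_i ∘ τ_{i+1} ∘ ⋯ ∘ τ_{i+k}(a)`, where each substitution is extended to words
by concatenation. -/
def tauComp (T : Γ →* (X ≃ₜ X)) (s : ℕ → Γ) (d : ℕ → ℕ) : ℕ → ℕ → X → List X
  | i, 0, a => tauWord T s d i a
  | i, k + 1, a => (tauComp T s d (i + 1) k a).flatMap (tauWord T s d i)

/-- The set of words of length `ℓ` (as functions `Fin ℓ → X`) occurring as subwords of some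
`τ_0 ∘ ⋯ ∘ τ_j (a)`. -/
def subwordSet (T : Γ →* (X ≃ₜ X)) (s : ℕ → Γ) (d : ℕ → ℕ) (a : X) (ℓ : ℕ) :
    Set (Fin ℓ → X) :=
  {v | ∃ j off : ℕ, ∀ m : Fin ℓ, (tauComp T s d 0 j a)[off + m.val]? = some (v m)}

/-- The language `L(τ̄,a)` in each length `ℓ`: subwords of the `τ_0 ∘ ⋯ ∘ τ_j(a)` together
with all their limits, i.e. the closure of `subwordSet` in `X^ℓ`. -/
def lang (T : Γ →* (X ≃ₜ X)) (s : ℕ → Γ) (d : ℕ → ℕ) (a : X) (ℓ : ℕ) : Set (Fin ℓ → X) :=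
  closure (subwordSet T s d a ℓ)

/-- The extension of the substitution `τ_n` to bi-infinite sequences: the image of
`x = (x_i)_i` is `⋯ τ_n(x_{-1}) . τ_n(x_0) τ_n(x_1) ⋯` with `τ_n(x_0)` starting at index 0;
since all `τ_n`-words have length `d n`, the letter at index `m` is
`T^{s_{(m mod d n)+1}} (x_{m div d n})`. -/
def tauSeq (T : Γ →* (X ≃ₜ X)) (s : ℕ → Γ) (d : ℕ → ℕ) (n : ℕ) (x : ℤ → X) : ℤ → X :=
  fun m => T (s (m % (d n : ℤ)).toNat) (x (m / (d n : ℤ)))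

/-- The sequence `τ_0 ∘ τ_1 ∘ ⋯ ∘ τ_n (x)` for a bi-infinite sequence `x`. -/
def tauSeqComp (T : Γ →* (X ≃ₜ X)) (s : ℕ → Γ) (d : ℕ → ℕ) : ℕ → (ℤ → X) → (ℤ → X)
  | 0, x => tauSeq T s d 0 x
  | n + 1, x => tauSeqComp T s d n (tauSeq T s d (n + 1) x)

/-- The generalized subshift `X_τ̄`: all bi-infinite sequences `y` such that every window
`y[-n,n]` belongs to the language `L(τ̄) = ⋃_a L(τ̄,a)`. -/
def Xtau (T : Γ →* (X ≃ₜ X)) (s : ℕ → Γ) (d : ℕ → ℕ) : Set (ℤ → X) :=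
  {y | ∀ n : ℕ, (fun m : Fin (2 * n + 1) => y ((m.val : ℤ) - (n : ℤ))) ∈
    ⋃ a : X, lang T s d a (2 * n + 1)}


lemma mem_tauWord_of_lt (T : Γ →* (X ≃ₜ X)) (s : ℕ → Γ) (d : ℕ → ℕ)
    {n j : ℕ} (hj : j < d n) (b : X) : T (s j) b ∈ tauWord T s d n b := by
  simp only [tauWord, List.mem_ofFn]
  exact ⟨⟨j, hj⟩, rfl⟩

lemma T_s0_apply (T : Γ →* (X ≃ₜ X)) (s : ℕ → Γ) (hs1 : s 0 = 1) (b : X) :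
    T (s 0) b = b := by
  rw [hs1, map_one]; rfl

lemma T_mul_apply (T : Γ →* (X ≃ₜ X)) (g h : Γ) (a : X) :
    T (g * h) a = T g (T h a) := by
  rw [map_mul]; rfl

/-- Key membership lemma: any product of letters `s j` with `j < d n₀`, of length at most
`k+1` and fitting after position `n₀`, is realized as a letter of `τ_i ∘ ⋯ ∘ τ_{i+k}(a)`. -/
lemma key_mem_tauComp (T : Γ →* (X ≃ₜ X)) (s : ℕ → Γ) (d : ℕ → ℕ)
    (hs1 : s 0 = 1) (hd : ∀ n, 1 ≤ d n) (hdmono : Monotone d) (n₀ : ℕ) :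
    ∀ (k i : ℕ) (a : X) (L : List ℕ), (∀ j ∈ L, j < d n₀) → L.length ≤ k + 1 →
      n₀ + L.length ≤ i + k + 1 → T ((L.map s).prod) a ∈ tauComp T s d i k a := by
  intro k
  induction k with
  | zero =>
    intro i a L hL hlen hfit
    match L, hlen with
    | [], _ =>
      have : T ((([] : List ℕ).map s).prod) a = T (s 0) a := by
        simp [hs1]
      rw [this]
      exact mem_tauWord_of_lt T s d (hd i) a
    | [j], _ =>
      have hji : j < d i := by
        have hn0 : n₀ ≤ i := by simpa using hfit
        exact lt_of_lt_of_le (hL j (by simp)) (hdmono hn0)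
      have : T ((([j] : List ℕ).map s).prod) a = T (s j) a := by simp
      rw [this]
      exact mem_tauWord_of_lt T s d hji a
  | succ k ih =>
    intro i a L hL hlen hfit
    show _ ∈ (tauComp T s d (i + 1) k a).flatMap (tauWord T s d i)
    rw [List.mem_flatMap]
    match L with
    | [] =>
      refine ⟨T ((([] : List ℕ).map s).prod) a, ih (i+1) a [] (by simp) (by simp) ?_, ?_⟩
      · simpa using le_trans (by omega : n₀ + 0 ≤ i + (k+1) + 1) (by omega)
      · have h2 := mem_tauWord_of_lt T s d (hd i) (T ((([] : List ℕ).map s).prod) a)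
        rwa [T_s0_apply T s hs1] at h2
    | j :: L' =>
      by_cases hni : n₀ ≤ i
      · -- consume the letter `j` now
        have hb : T ((L'.map s).prod) a ∈ tauComp T s d (i+1) k a := by
          refine ih (i+1) a L' (fun x hx => hL x (by simp [hx])) ?_ ?_
          · simp at hlen; omega
          · simp at hfit ⊢; omega
        refine ⟨T ((L'.map s).prod) a, hb, ?_⟩
        have hji : j < d i := lt_of_lt_of_le (hL j (by simp)) (hdmono hni)
        have : T (((j :: L').map s).prod) a = T (s j) (T ((L'.map s).prod) a) := by
          rw [List.map_cons, List.prod_cons, T_mul_apply]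
        rw [this]
        exact mem_tauWord_of_lt T s d hji _
      · -- pad with `s 0 = 1`
        have hb : T (((j :: L').map s).prod) a ∈ tauComp T s d (i+1) k a := by
          refine ih (i+1) a (j :: L') hL ?_ ?_
          · simp at hfit ⊢; omega
          · simp at hfit ⊢; omega
        refine ⟨T (((j :: L').map s).prod) a, hb, ?_⟩
        have h2 := mem_tauWord_of_lt T s d (hd i) (T (((j :: L').map s).prod) a)
        rwa [T_s0_apply T s hs1] at h2

/-- **primitivity.** For the generalized `S`-adic system `τ̄ = (τ_n)_n`
associated to an aperiodic minimal Cantor system `(X,T,Γ)` and a nested sequence of finite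
symmetric generating sets `S_n = {s 0, …, s (d n - 1)}`: for every nonempty open `V ⊆ X`
there is `N` such that for every letter `a ∈ X`, every `k ≥ N` and every `i ≥ 0`, one of
the letters of `τ_i ∘ ⋯ ∘ τ_{k+i}(a)` lies in `V`. -/
theorem sadic_primitive
    {X : Type*} [TopologicalSpace X] [CompactSpace X] [MetrizableSpace X]
    [TotallyDisconnectedSpace X] [PerfectSpace X] [Nonempty X]
    {Γ : Type*} [Group Γ] [Countable Γ]
    (T : Γ →* (X ≃ₜ X))
    (hfree : ∀ (γ : Γ) (x : X), T γ x = x → γ = 1)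
    (hmin : ∀ x : X, Dense (Set.range fun γ : Γ => T γ x))
    (s : ℕ → Γ) (d : ℕ → ℕ)
    (hs1 : s 0 = 1) (hd : ∀ n, 1 ≤ d n) (hdmono : Monotone d)
    (hsym : ∀ n, ∀ i < d n, ∃ j < d n, s j = (s i)⁻¹)
    (hgen : Subgroup.closure {g : Γ | ∃ n, ∃ i < d n, s i = g} = ⊤)
    (V : Set X) (hV : IsOpen V) (hVne : V.Nonempty) :
    ∃ N : ℕ, ∀ (a : X) (k : ℕ), N ≤ k → ∀ i : ℕ,
      ∃ b ∈ tauComp T s d i k a, b ∈ V := by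
  classical
  -- Step 1: uniform return to V by compactness and minimality
  have hcov : ∀ x : X, ∃ γ : Γ, x ∈ (fun y => T γ y) ⁻¹' V := by
    intro x
    obtain ⟨y, hy, hyV⟩ := (hmin x).exists_mem_open hV hVne
    obtain ⟨γ, rfl⟩ := hy
    exact ⟨γ, hyV⟩
  obtain ⟨F, hF⟩ := isCompact_univ.elim_finite_subcover
    (fun γ : Γ => (fun y => T γ y) ⁻¹' V)
    (fun γ => hV.preimage (T γ).continuous)
    (fun x _ => Set.mem_iUnion.2 (hcov x))
  have hFcov : ∀ x : X, ∃ γ ∈ F, T γ x ∈ V := by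
    intro x
    have := hF (Set.mem_univ x)
    simp only [Set.mem_iUnion, Set.mem_preimage] at this
    obtain ⟨γ, hγ, hx⟩ := this
    exact ⟨γ, hγ, hx⟩
  -- Step 2: every group element is a word in the letters `s j`
  have hinvL : ∀ L : List ℕ, (∀ j ∈ L, ∃ n, j < d n) →
      ∃ L' : List ℕ, (∀ j ∈ L', ∃ n, j < d n) ∧
        (L'.map s).prod = ((L.map s).prod)⁻¹ := by
    intro L hL
    induction L with
    | nil => exact ⟨[], by simp, by simp⟩
    | cons j L ih =>
      obtain ⟨L', hL', hprod⟩ := ih (fun x hx => hL x (by simp [hx]))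
      obtain ⟨n, hn⟩ := hL j (by simp)
      obtain ⟨j', hj', hsj'⟩ := hsym n j hn
      refine ⟨L' ++ [j'], ?_, ?_⟩
      · intro x hx
        rcases List.mem_append.1 hx with h | h
        · exact hL' x h
        · simp at h; exact ⟨n, h ▸ hj'⟩
      · simp [List.prod_append, hprod, hsj', mul_comm]
  have hword : ∀ γ : Γ, ∃ L : List ℕ, (∀ j ∈ L, ∃ n, j < d n) ∧
      (L.map s).prod = γ := by
    intro γ
    have hγ : γ ∈ Subgroup.closure {g : Γ | ∃ n, ∃ i < d n, s i = g} := by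
      rw [hgen]; trivial
    induction hγ using Subgroup.closure_induction with
    | mem g hg =>
      obtain ⟨n, i, hi, hsi⟩ := hg
      exact ⟨[i], fun j hj => by simp at hj; exact ⟨n, hj ▸ hi⟩, by simp [hsi]⟩
    | one => exact ⟨[], by simp, by simp⟩
    | mul g h _ _ ihg ihh =>
      obtain ⟨L₁, hL₁, hp₁⟩ := ihg
      obtain ⟨L₂, hL₂, hp₂⟩ := ihh
      refine ⟨L₁ ++ L₂, ?_, by simp [List.prod_append, hp₁, hp₂]⟩
      intro x hx
      rcases List.mem_append.1 hx with h | h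
      · exact hL₁ x h
      · exact hL₂ x h
    | inv g _ ihg =>
      obtain ⟨L, hL, hp⟩ := ihg
      obtain ⟨L', hL', hp'⟩ := hinvL L hL
      exact ⟨L', hL', by rw [hp', hp]⟩
  -- Step 3: a single uniform bound for all elements of F
  have hsingle : ∀ L : List ℕ, (∀ j ∈ L, ∃ n, j < d n) → ∃ n, ∀ j ∈ L, j < d n := by
    intro L hL
    induction L with
    | nil => exact ⟨0, by simp⟩
    | cons j L ih =>
      obtain ⟨n₁, hn₁⟩ := ih (fun x hx => hL x (by simp [hx]))
      obtain ⟨n₂, hn₂⟩ := hL j (by simp)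
      refine ⟨max n₁ n₂, ?_⟩
      intro x hx
      rcases List.mem_cons.1 hx with rfl | hx
      · exact lt_of_lt_of_le hn₂ (hdmono (le_max_right _ _))
      · exact lt_of_lt_of_le (hn₁ x hx) (hdmono (le_max_left _ _))
  have hQ : ∀ γ : Γ, ∃ n : ℕ, ∃ L : List ℕ, (∀ j ∈ L, j < d n) ∧ L.length ≤ n ∧
      (L.map s).prod = γ := by
    intro γ
    obtain ⟨L, hL, hp⟩ := hword γ
    obtain ⟨n, hn⟩ := hsingle L hL
    refine ⟨max n L.length, L, ?_, le_max_right _ _, hp⟩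
    intro j hj
    exact lt_of_lt_of_le (hn j hj) (hdmono (le_max_left _ _))
  choose g hg using hQ
  set N := F.sup g with hN
  have hQN : ∀ γ ∈ F, ∃ L : List ℕ, (∀ j ∈ L, j < d N) ∧ L.length ≤ N ∧
      (L.map s).prod = γ := by
    intro γ hγ
    obtain ⟨L, h1, h2, h3⟩ := hg γ
    have hle : g γ ≤ N := Finset.le_sup hγ
    exact ⟨L, fun j hj => lt_of_lt_of_le (h1 j hj) (hdmono hle), le_trans h2 hle, h3⟩
  -- Step 4: conclude with the key lemma
  refine ⟨2 * N, ?_⟩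
  intro a k hk i
  obtain ⟨γ, hγF, hγV⟩ := hFcov a
  obtain ⟨L, hL, hlen, hprod⟩ := hQN γ hγF
  refine ⟨T ((L.map s).prod) a, ?_, by rw [hprod]; exact hγV⟩
  exact key_mem_tauComp T s d hs1 hd hdmono N k i a L hL (by omega) (by omega)
end
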